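/- Let d ≥ 1 and α ∈ (0,1], and let ψ : {0,1}^d → {0,1}^{4d} be a map such that for all y ≠ y' in {0,1}^d the Hamming distance between ψ(y) and ψ(y') is at least 4αd. Define φ : {0,1}^d → ℝ^d by grouping the bits of ψ(y) into d blocks of 4 and setting φ(y)_i = (8·ψ(y)_{4i−3} + 4·ψ(y)_{4i−2} + 2·ψ(y)_{4i−1} + ψ(y)_{4i}) / (15√d). Then φ(y) lies in the closed unit Euclidean ball B_d(0,1) for every y, and for all y ≠ y', ‖φ(y) − φ(y')‖ ≥ √α/15; in particular, for ε = √α/120 the closed balls B(φ(y), 2ε) for distinct y are pairwise disjoint. -/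

import Mathlib

open Real Finset

private lemma natval_inj : ∀ a b c e a' b' c' e' : Bool,
    8*a.toNat+4*b.toNat+2*c.toNat+e.toNat = 8*a'.toNat+4*b'.toNat+2*c'.toNat+e'.toNat →
    a = a' ∧ b = b' ∧ c = c' ∧ e = e' := by decide

private lemma ite_eq_toNat (b : Bool) : (if b then (1:ℝ) else 0) = (b.toNat : ℝ) := by
  cases b <;> simp

private lemma nat_abs_gap (m n : ℕ) (h : m ≠ n) : 1 ≤ |(m:ℝ) - n| := by
  have h1 : ((m:ℤ) - n) ≠ 0 := by intro hh; apply h; omega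
  have h2 := Int.one_le_abs h1
  have h3 : ((1:ℤ):ℝ) ≤ ((|(m:ℤ) - n| : ℤ) : ℝ) := by exact_mod_cast h2
  push_cast at h3
  linarith

private lemma numer_bounds (a b c e : Bool) :
    0 ≤ 8*(if a then (1:ℝ) else 0) + 4*(if b then (1:ℝ) else 0) +
      2*(if c then (1:ℝ) else 0) + (if e then (1:ℝ) else 0) ∧
    8*(if a then (1:ℝ) else 0) + 4*(if b then (1:ℝ) else 0) +
      2*(if c then (1:ℝ) else 0) + (if e then (1:ℝ) else 0) ≤ 15 := by
  constructor <;> (split_ifs <;> norm_num)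

private lemma numer_gap (a b c e a' b' c' e' : Bool)
    (h : ¬(a = a' ∧ b = b' ∧ c = c' ∧ e = e')) :
    1 ≤ |(8*(if a then (1:ℝ) else 0) + 4*(if b then (1:ℝ) else 0) +
      2*(if c then (1:ℝ) else 0) + (if e then (1:ℝ) else 0)) -
      (8*(if a' then (1:ℝ) else 0) + 4*(if b' then (1:ℝ) else 0) +
      2*(if c' then (1:ℝ) else 0) + (if e' then (1:ℝ) else 0))| := by
  have hne : 8*a.toNat+4*b.toNat+2*c.toNat+e.toNat ≠
      8*a'.toNat+4*b'.toNat+2*c'.toNat+e'.toNat :=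
    fun hh => h (natval_inj _ _ _ _ _ _ _ _ hh)
  have := nat_abs_gap _ _ hne
  simp only [ite_eq_toNat]
  push_cast at this ⊢
  convert this using 3 <;> ring

/-- The embedding of a `4d`-bit codeword into the unit ball of `ℝ^d`: the `i`-th
coordinate reads the `i`-th block of 4 bits as an integer in `{0,…,15}` scaled by
`1/(15√d)`. -/
noncomputable def phiEmbed {d : ℕ} (ψ : (Fin d → Bool) → (Fin (4 * d) → Bool))
    (y : Fin d → Bool) : EuclideanSpace ℝ (Fin d) :=
  WithLp.toLp 2 fun (i : Fin d) =>
    (8 * (if ψ y ⟨4 * i.val, by have := i.isLt; omega⟩ then (1 : ℝ) else 0) +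
        4 * (if ψ y ⟨4 * i.val + 1, by have := i.isLt; omega⟩ then (1 : ℝ) else 0) +
        2 * (if ψ y ⟨4 * i.val + 2, by have := i.isLt; omega⟩ then (1 : ℝ) else 0) +
        (if ψ y ⟨4 * i.val + 3, by have := i.isLt; omega⟩ then (1 : ℝ) else 0)) /
      (15 * Real.sqrt d)

/-- Embedding an error-correcting code with Hamming distance `≥ 4αd`
into the unit ball yields points `φ(y)` that are pairwise at Euclidean distance at
least `√α/15`; in particular, with `ε = √α/120`, the balls `B(φ(y), 2ε)` are pairwise
disjoint. -/
theorem code_embedding_separated (d : ℕ) (hd : 1 ≤ d)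
    (α : ℝ) (hα : 0 < α) (hα' : α ≤ 1)
    (ψ : (Fin d → Bool) → (Fin (4 * d) → Bool))
    (hψ : ∀ y y' : Fin d → Bool, y ≠ y' →
      4 * α * (d : ℝ) ≤ (hammingDist (ψ y) (ψ y') : ℝ)) :
    (∀ y : Fin d → Bool,
      phiEmbed ψ y ∈ Metric.closedBall (0 : EuclideanSpace ℝ (Fin d)) 1) ∧
    (∀ y y' : Fin d → Bool, y ≠ y' →
      Real.sqrt α / 15 ≤ ‖phiEmbed ψ y - phiEmbed ψ y'‖) ∧
    (∀ y y' : Fin d → Bool, y ≠ y' →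
      Disjoint (Metric.closedBall (phiEmbed ψ y) (2 * (Real.sqrt α / 120)))
        (Metric.closedBall (phiEmbed ψ y') (2 * (Real.sqrt α / 120)))) := by

  classical
  have hd0 : (0:ℝ) < d := by exact_mod_cast hd
  have hs : 0 < Real.sqrt d := Real.sqrt_pos.mpr hd0
  have hbound : ∀ (y : Fin d → Bool) (i : Fin d),
      0 ≤ phiEmbed ψ y i ∧ phiEmbed ψ y i ≤ 1 / Real.sqrt d := by
    intro y i
    have h := numer_bounds (ψ y ⟨4 * i.val, by have := i.isLt; omega⟩)
      (ψ y ⟨4 * i.val + 1, by have := i.isLt; omega⟩)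
      (ψ y ⟨4 * i.val + 2, by have := i.isLt; omega⟩)
      (ψ y ⟨4 * i.val + 3, by have := i.isLt; omega⟩)
    unfold phiEmbed
    constructor
    · exact div_nonneg h.1 (by positivity)
    · rw [div_le_div_iff₀ (by positivity) hs]
      nlinarith [h.2, hs]
  -- Part 1
  have part1 : ∀ y : Fin d → Bool,
      phiEmbed ψ y ∈ Metric.closedBall (0 : EuclideanSpace ℝ (Fin d)) 1 := by
    intro y
    rw [Metric.mem_closedBall, dist_zero_right, EuclideanSpace.norm_eq]
    have hle : ∑ i, ‖phiEmbed ψ y i‖ ^ 2 ≤ 1 := by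
      have h1 : ∑ i, ‖phiEmbed ψ y i‖ ^ 2 ≤ ∑ _i : Fin d, 1 / (d:ℝ) := by
        apply Finset.sum_le_sum
        intro i _
        have hb := hbound y i
        have h2 : ‖phiEmbed ψ y i‖ ≤ 1 / Real.sqrt d := by
          rw [Real.norm_eq_abs, abs_of_nonneg hb.1]; exact hb.2
        calc ‖phiEmbed ψ y i‖ ^ 2 ≤ (1 / Real.sqrt d) ^ 2 :=
              pow_le_pow_left₀ (norm_nonneg _) h2 2
          _ = 1 / d := by rw [div_pow, one_pow, Real.sq_sqrt hd0.le]
      have h3 : ∑ _i : Fin d, 1 / (d:ℝ) = 1 := by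
        rw [Finset.sum_const, Finset.card_univ, Fintype.card_fin, nsmul_eq_mul]
        field_simp
      linarith
    calc Real.sqrt (∑ i, ‖phiEmbed ψ y i‖ ^ 2) ≤ Real.sqrt 1 := Real.sqrt_le_sqrt hle
      _ = 1 := Real.sqrt_one
  -- Part 2
  have part2 : ∀ y y' : Fin d → Bool, y ≠ y' →
      Real.sqrt α / 15 ≤ ‖phiEmbed ψ y - phiEmbed ψ y'‖ := by
    intro y y' hne
    set S : Finset (Fin d) := Finset.univ.filter (fun i =>
      ∃ r : Fin 4, ψ y ⟨4 * i.val + r.val, by have := i.isLt; have := r.isLt; omega⟩ ≠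
        ψ y' ⟨4 * i.val + r.val, by have := i.isLt; have := r.isLt; omega⟩) with hSdef
    -- counting
    have hcount : hammingDist (ψ y) (ψ y') ≤ 4 * S.card := by
      rw [hammingDist]
      set f : Fin (4 * d) → Fin d × Fin 4 := fun j =>
        (⟨j.val / 4, by have := j.isLt; omega⟩, ⟨j.val % 4, by omega⟩) with hfdef
      have hfinj : Function.Injective f := by
        intro j j' hjj
        have h1 : j.val / 4 = j'.val / 4 := congrArg (fun p => p.1.val) hjj
        have h2 : j.val % 4 = j'.val % 4 := congrArg (fun p => p.2.val) hjj
        ext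
        omega
      set D : Finset (Fin (4 * d)) := {j | ψ y j ≠ ψ y' j} with hDdef
      have himg : D.image f ⊆ S ×ˢ Finset.univ := by
        intro p hp
        rw [Finset.mem_image] at hp
        obtain ⟨j, hj, hpj⟩ := hp
        rw [Finset.mem_product]
        refine ⟨?_, Finset.mem_univ _⟩
        rw [hSdef, Finset.mem_filter]
        refine ⟨Finset.mem_univ _, ?_⟩
        subst hpj
        refine ⟨⟨j.val % 4, by omega⟩, ?_⟩
        have hjeq : (⟨4 * (j.val / 4) + j.val % 4, by have := j.isLt; omega⟩ : Fin (4 * d)) = j := by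
          ext; simp; omega
        rw [hjeq]
        simpa [hDdef] using hj
      calc D.card = (D.image f).card := (Finset.card_image_of_injective D hfinj).symm
        _ ≤ (S ×ˢ (Finset.univ : Finset (Fin 4))).card := Finset.card_le_card himg
        _ = S.card * 4 := by rw [Finset.card_product]; simp
        _ ≤ 4 * S.card := by omega
    have hScard : α * d ≤ (S.card : ℝ) := by
      have h1 := hψ y y' hne
      have h2 : (hammingDist (ψ y) (ψ y') : ℝ) ≤ 4 * S.card := by exact_mod_cast hcount
      linarith
    -- per-coordinate gap
    have hterm : ∀ i ∈ S, 1 / (225 * (d:ℝ)) ≤ ‖(phiEmbed ψ y - phiEmbed ψ y') i‖ ^ 2 := by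
      intro i hi
      rw [hSdef, Finset.mem_filter] at hi
      obtain ⟨-, r, hr⟩ := hi
      have hdiff : ¬(ψ y ⟨4 * i.val, by have := i.isLt; omega⟩ = ψ y' ⟨4 * i.val, by have := i.isLt; omega⟩ ∧
          ψ y ⟨4 * i.val + 1, by have := i.isLt; omega⟩ = ψ y' ⟨4 * i.val + 1, by have := i.isLt; omega⟩ ∧
          ψ y ⟨4 * i.val + 2, by have := i.isLt; omega⟩ = ψ y' ⟨4 * i.val + 2, by have := i.isLt; omega⟩ ∧
          ψ y ⟨4 * i.val + 3, by have := i.isLt; omega⟩ = ψ y' ⟨4 * i.val + 3, by have := i.isLt; omega⟩) := by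
        rintro ⟨h0, h1, h2, h3⟩
        apply hr
        have hrv : r.val = 0 ∨ r.val = 1 ∨ r.val = 2 ∨ r.val = 3 := by omega
        rcases hrv with h | h | h | h
        · convert h0 using 2 <;> simp [Fin.mk.injEq, h]
        · convert h1 using 2 <;> simp [Fin.mk.injEq, h]
        · convert h2 using 2 <;> simp [Fin.mk.injEq, h]
        · convert h3 using 2 <;> simp [Fin.mk.injEq, h]
      have hgap := numer_gap _ _ _ _ _ _ _ _ hdiff
      have happ : (phiEmbed ψ y - phiEmbed ψ y') i = phiEmbed ψ y i - phiEmbed ψ y' i := rfl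
      rw [happ]
      unfold phiEmbed
      rw [div_sub_div_same, Real.norm_eq_abs, abs_div, div_pow]
      have hden : |15 * Real.sqrt d| ^ 2 = 225 * d := by
        rw [abs_of_pos (by positivity), mul_pow, Real.sq_sqrt hd0.le]; norm_num
      rw [hden]
      gcongr
      nlinarith [hgap]
    -- sum lower bound
    have hsum : α / 225 ≤ ∑ i, ‖(phiEmbed ψ y - phiEmbed ψ y') i‖ ^ 2 := by
      have h1 : ∑ _i ∈ S, 1 / (225 * (d:ℝ)) ≤ ∑ i ∈ S, ‖(phiEmbed ψ y - phiEmbed ψ y') i‖ ^ 2 :=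
        Finset.sum_le_sum hterm
      have h2 : ∑ i ∈ S, ‖(phiEmbed ψ y - phiEmbed ψ y') i‖ ^ 2 ≤
          ∑ i, ‖(phiEmbed ψ y - phiEmbed ψ y') i‖ ^ 2 :=
        Finset.sum_le_sum_of_subset_of_nonneg (Finset.subset_univ _)
          (fun i _ _ => by positivity)
      have h3 : ∑ _i ∈ S, 1 / (225 * (d:ℝ)) = S.card / (225 * d) := by
        rw [Finset.sum_const, nsmul_eq_mul]; ring
      have h4 : α / 225 ≤ (S.card : ℝ) / (225 * d) := by
        rw [div_le_div_iff₀ (by norm_num) (by positivity)]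
        nlinarith [hScard]
      linarith
    rw [EuclideanSpace.norm_eq]
    apply Real.le_sqrt_of_sq_le
    calc (Real.sqrt α / 15) ^ 2 = α / 225 := by
          rw [div_pow, Real.sq_sqrt hα.le]; norm_num
      _ ≤ _ := hsum
  refine ⟨part1, part2, ?_⟩
  intro y y' hne
  apply Metric.closedBall_disjoint_closedBall
  rw [dist_eq_norm]
  have hsa : 0 < Real.sqrt α := Real.sqrt_pos.mpr hα
  have := part2 y y' hne
  linarith
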